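/- arXiv:1807.05743 — 4 statements merged into one kernel-verified Lean document; each statement's English description precedes it below -/
import Mathlib

section
/- Let C_1,…,C_n be subsets of {1,…,n} such that i ∈ C_i for every i, and such that k ∈ C_i and i ∈ C_j imply k ∈ C_j for all i, j, k. Let m_i = ∏_{j ∈ C_i} x_j, for σ ⊆ {1,…,n} let m_σ = lcm(m_i : i ∈ σ), and for a collection Σ of subsets of {1,…,n} let I_Σ = ⟨m_σ : σ ∈ Σ⟩ ⊆ k[x_1,…,x_n]. Suppose (1) for every i ∈ {1,…,n} there is σ ∈ Σ with x_i dividing m_σ, and (2) whenever {σ ∈ Σ : x_i divides m_σ} ⊆ {σ ∈ Σ : x_j divides m_σ}, then C_j ⊆ C_i. Then for every j ∈ {1,…,n}, ⋂{ supp(m_σ) : σ ∈ Σ, x_j divides m_σ } = C_j; that is, the support poset of I_Σ is ({C_1,…,C_n}, ⊆). -/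
/-- Let `C_1,…,C_n ⊆ {1,…,n}` with `i ∈ C_i`, and such that
`k ∈ C_i` and `i ∈ C_j` imply `k ∈ C_j`.  Let `m_i = ∏_{j ∈ C_i} x_j`, for
`σ ⊆ {1,…,n}` let `m_σ = lcm (m_i : i ∈ σ)` (a squarefree monomial, whose support is
`σ.sup C = ⋃_{i ∈ σ} C_i`), and for a collection `Sig` of subsets of `{1,…,n}` let
`I_Sig = ⟨m_σ : σ ∈ Sig⟩`.  Assume (1) every variable `x_i` divides some `m_σ`, and
(2) whenever `{σ ∈ Sig : x_i ∣ m_σ} ⊆ {σ ∈ Sig : x_j ∣ m_σ}` we have `C_j ⊆ C_i`.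
Then for every `j`, `⋂ { supp (m_σ) : σ ∈ Sig, x_j ∣ m_σ } = C_j`, i.e. the support
poset of `I_Sig` is `({C_1,…,C_n}, ⊆)`. -/
theorem support_poset_of_I_Sigma (n : ℕ) (C : Fin n → Finset (Fin n))
    (hrefl : ∀ i, i ∈ C i)
    (htrans : ∀ i j k : Fin n, k ∈ C i → i ∈ C j → k ∈ C j)
    (Sig : Finset (Finset (Fin n)))
    (h1 : ∀ i : Fin n, ∃ σ ∈ Sig, i ∈ σ.sup C)
    (h2 : ∀ i j : Fin n, (∀ σ ∈ Sig, i ∈ σ.sup C → j ∈ σ.sup C) → C j ⊆ C i) :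
    ∀ j : Fin n, {q : Fin n | ∀ σ ∈ Sig, j ∈ σ.sup C → q ∈ σ.sup C} = ↑(C j) := by
  intro j
  ext q
  simp only [Set.mem_setOf_eq, Finset.coe_mem, Finset.mem_coe]
  constructor
  · intro hq
    exact h2 j q hq (hrefl q)
  · intro hq σ hσ hj
    rw [Finset.mem_sup] at hj ⊢
    obtain ⟨i, hi, hji⟩ := hj
    exact ⟨i, hi, htrans j i q hq hji⟩
end

section
/- Let I ⊆ k[x_1,…,x_n] be a squarefree monomial ideal with full support, < a total order on the variables, and {σ_1,…,σ_k} a depolarization order of I, i.e., a partition of {x_1,…,x_n} into disjoint paths of suppPos_<(I); write σ_j = (σ_j(1) ≺ ⋯ ≺ σ_j(|σ_j|)) in increasing ≺-order. Let J ⊆ k[y_1,…,y_k] be the monomial ideal generated by the images of the elements of G(I) under the substitution x_i ↦ y_j for i ∈ σ_j. Then J is a depolarization of I: the bijection of variables sending y_{j,ℓ} to σ_j(ℓ) maps the minimal monomial generating set G(J^P) of the polarization J^P bijectively onto G(I). -/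
/-- For a squarefree monomial ideal with minimal monomial generating set `G` (squarefree
monomials identified with their supports), the support set
`C i = ⋂ { supp m : m ∈ G, x_i ∣ m }`. -/
def suppC {n : ℕ} (G : Finset (Finset (Fin n))) (i : Fin n) : Finset (Fin n) :=
  Finset.univ.filter (fun j => ∀ s ∈ G, i ∈ s → j ∈ s)

/-- The strict order of the `<`-support poset `suppPos_<(I)` on the variables, for a
given strict total order `lt` on the variables: `x_i ≺ x_j` iff `C_i ⊊ C_j`, or
`C_i = C_j` and `lt i j`. -/
def suppPrec {n : ℕ} (G : Finset (Finset (Fin n))) (lt : Fin n → Fin n → Prop)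
    (i j : Fin n) : Prop :=
  suppC G i ⊂ suppC G j ∨ (suppC G i = suppC G j ∧ lt i j)

/-- A subset `σ` of the variables is a path of `suppPos_<(I)` if it is a chain and there
is no element `p ∉ σ` comparable to every element of `σ` with
`min(σ) ≺ p ≺ max(σ)` (equivalently, lying strictly between two elements of `σ`). -/
def IsPath {n : ℕ} (G : Finset (Finset (Fin n))) (lt : Fin n → Fin n → Prop)
    (σ : Finset (Fin n)) : Prop :=
  (∀ i ∈ σ, ∀ j ∈ σ, i ≠ j → suppPrec G lt i j ∨ suppPrec G lt j i) ∧
  ¬ ∃ p : Fin n, p ∉ σ ∧ (∀ q ∈ σ, suppPrec G lt p q ∨ suppPrec G lt q p) ∧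
      (∃ q ∈ σ, suppPrec G lt q p) ∧ (∃ q ∈ σ, suppPrec G lt p q)

/-- `σ_1, …, σ_k` is a partition of the variables into (nonempty) disjoint paths of
`suppPos_<(I)`. -/
def IsPathPartition {n : ℕ} (G : Finset (Finset (Fin n))) (lt : Fin n → Fin n → Prop)
    (k : ℕ) (σ : Fin k → Finset (Fin n)) : Prop :=
  (∀ j, (σ j).Nonempty) ∧ (∀ j, IsPath G lt (σ j)) ∧
    (∀ j j', j ≠ j' → Disjoint (σ j) (σ j')) ∧ (∀ i : Fin n, ∃ j, i ∈ σ j)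

/-- The polarization of the monomial `y^ν` (with `ν_j ≤ a_j`) with respect to `a`,
viewed as a squarefree monomial in the variables `y_{j,ℓ}`, identified with the set of
variables dividing it. -/
def polarSet {K : ℕ} (a : Fin K → ℕ) (ν : Fin K → ℕ) : Set (Σ j : Fin K, Fin (a j)) :=
  {p | (p.2 : ℕ) < ν p.1}

section Aux

variable {n : ℕ} {G : Finset (Finset (Fin n))} {lt : Fin n → Fin n → Prop}

lemma mem_suppC_self (G : Finset (Finset (Fin n))) (i : Fin n) : i ∈ suppC G i := by
  simp [suppC]

lemma suppC_subset {i : Fin n} {s : Finset (Fin n)} (hs : s ∈ G) (hi : i ∈ s) :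
    suppC G i ⊆ s := fun j hj => by
  simp only [suppC, Finset.mem_filter] at hj
  exact hj.2 s hs hi

lemma suppPrec_subset {i j : Fin n} (h : suppPrec G lt i j) :
    suppC G i ⊆ suppC G j := by
  rcases h with h | h
  · exact h.subset
  · exact h.1.le

lemma suppPrec_down {i j : Fin n} (h : suppPrec G lt i j) {s : Finset (Fin n)}
    (hs : s ∈ G) (hj : j ∈ s) : i ∈ s :=
  suppC_subset hs hj (suppPrec_subset h (mem_suppC_self G i))

lemma suppPrec_irrefl (hlt : IsStrictTotalOrder (Fin n) lt) (i : Fin n) :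
    ¬ suppPrec G lt i i := by
  rintro (h | ⟨-, h⟩)
  · exact h.ne rfl
  · exact hlt.toIsStrictOrder.toIrrefl.irrefl i h

lemma suppPrec_trans (hlt : IsStrictTotalOrder (Fin n) lt) {i j l : Fin n}
    (h₁ : suppPrec G lt i j) (h₂ : suppPrec G lt j l) : suppPrec G lt i l := by
  rcases h₁ with h₁ | ⟨e₁, h₁⟩ <;> rcases h₂ with h₂ | ⟨e₂, h₂⟩
  · exact Or.inl (h₁.trans h₂)
  · exact Or.inl (e₂ ▸ h₁)
  · exact Or.inl (e₁ ▸ h₂)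
  · exact Or.inr ⟨e₁.trans e₂, hlt.toIsStrictOrder.toIsTrans.trans _ _ _ h₁ h₂⟩

/-- A downward-closed finset of `Fin N` is an initial segment. -/
lemma mem_iff_lt_card_of_down {N : ℕ} {T : Finset (Fin N)}
    (hT : ∀ ℓ ℓ' : Fin N, ℓ ≤ ℓ' → ℓ' ∈ T → ℓ ∈ T) (ℓ : Fin N) :
    ℓ ∈ T ↔ (ℓ : ℕ) < T.card := by
  constructor
  · intro hℓ
    have h1 : Finset.Iic ℓ ⊆ T := fun y hy => hT y ℓ (Finset.mem_Iic.mp hy) hℓ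
    have h2 := Finset.card_le_card h1
    rw [Fin.card_Iic] at h2
    omega
  · intro hℓ
    by_contra hmem
    have h1 : T ⊆ Finset.Iio ℓ := by
      intro y hy
      rw [Finset.mem_Iio]
      by_contra hle
      exact hmem (hT ℓ y (le_of_not_gt hle) hy)
    have h2 := Finset.card_le_card h1
    rw [Fin.card_Iio] at h2
    omega


/-- A strict total order on a fintype of cardinality `N` admits an increasing
enumeration by `Fin N`. -/
lemma exists_sto_enum {α : Type*} [Fintype α] (r : α → α → Prop)
    (hr : IsStrictTotalOrder α r) {N : ℕ} (hN : Fintype.card α = N) :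
    ∃ e : Fin N ≃ α, ∀ ℓ ℓ' : Fin N, ℓ < ℓ' → r (e ℓ) (e ℓ') := by
  haveI := hr
  haveI : DecidableRel r := fun _ _ => Classical.dec _
  letI := linearOrderOfSTO r
  exact ⟨(monoEquivOfFin α hN).toEquiv, fun ℓ ℓ' h => (monoEquivOfFin α hN).strictMono h⟩

/-- A strict total order on a nonempty finite type has a top element. -/
lemma exists_sto_top {α : Type*} [Fintype α] [Nonempty α] (r : α → α → Prop)
    (hr : IsStrictTotalOrder α r) : ∃ q : α, ∀ x : α, x = q ∨ r x q := by
  haveI := hr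
  haveI : DecidableRel r := fun _ _ => Classical.dec _
  letI := linearOrderOfSTO r
  obtain ⟨q, hq⟩ := Finite.exists_max (id : α → α)
  refine ⟨q, fun x => ?_⟩
  rcases lt_or_eq_of_le (hq x) with h | h
  · exact Or.inr h
  · exact Or.inl h

end Aux

/-- **Proposition: every depolarization order yields a depolarization.**
Let `I ⊆ k[x_1,…,x_n]` be a squarefree monomial ideal with full support, given by its
minimal monomial generating set `G` (an antichain of supports), `lt` a total order on
the variables, and `σ_1,…,σ_k` a depolarization order of `I`, i.e. a partition of the
variables into disjoint paths of `suppPos_<(I)`.  Let `J ⊆ k[y_1,…,y_k]` be generated by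
the images of `G(I)` under `x_i ↦ y_j` for `i ∈ σ_j`; thus the image of `m ∈ G(I)` is
the monomial with exponent vector `genExp m : j ↦ #(m ∩ σ_j)`, and the componentwise
maximal exponent vector of the generators of `J` is `a : j ↦ max_{m ∈ G} #(m ∩ σ_j)`.
Then `J` is a depolarization of `I`: the bijection of variables `y_{j,ℓ} ↦ σ_j(ℓ)`
(sending, for each `j`, the variables `y_{j,1} , … , y_{j,a_j}` to the elements of `σ_j`
in increasing `≺`-order) maps the minimal monomial generating set `G(J^P)` of the
polarization `J^P` (namely the polarizations of the monomials `genExp m`, `m ∈ G`, which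
indeed form an antichain and correspond bijectively to `G`) bijectively onto `G(I)`. -/
theorem depolarization_order_gives_depolarization (n : ℕ)
    (G : Finset (Finset (Fin n)))
    (hmin : ∀ s ∈ G, ∀ t ∈ G, s ⊆ t → s = t)
    (hfull : ∀ i : Fin n, ∃ s ∈ G, i ∈ s)
    (lt : Fin n → Fin n → Prop) (hlt : IsStrictTotalOrder (Fin n) lt)
    (k : ℕ) (σ : Fin k → Finset (Fin n)) (hσ : IsPathPartition G lt k σ)
    (genExp : Finset (Fin n) → Fin k → ℕ)
    (hgen : ∀ m j, genExp m j = (m ∩ σ j).card)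
    (a : Fin k → ℕ) (ha : ∀ j, a j = G.sup (fun m => genExp m j)) :
    ∃ φ : (Σ j : Fin k, Fin (a j)) ≃ Fin n,
      (∀ j (ℓ : Fin (a j)), φ ⟨j, ℓ⟩ ∈ σ j) ∧
      (∀ j (ℓ ℓ' : Fin (a j)), ℓ < ℓ' → suppPrec G lt (φ ⟨j, ℓ⟩) (φ ⟨j, ℓ'⟩)) ∧
      (∀ m ∈ G, φ '' polarSet a (genExp m) = ↑m) ∧
      Set.InjOn (fun m => polarSet a (genExp m)) ↑G ∧
      (∀ m ∈ G, ∀ m' ∈ G, polarSet a (genExp m) ⊆ polarSet a (genExp m') → m = m') := by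
  classical
  -- Step 1: for every `j`, enumerate `σ j` in increasing `≺`-order.
  have main : ∀ j : Fin k, ∃ f : Fin (a j) → Fin n,
      (∀ ℓ, f ℓ ∈ σ j) ∧
      (∀ ℓ ℓ', ℓ < ℓ' → suppPrec G lt (f ℓ) (f ℓ')) ∧
      (∀ x ∈ σ j, ∃ ℓ, f ℓ = x) ∧
      (∀ m ∈ G, ∀ ℓ, f ℓ ∈ m ↔ (ℓ : ℕ) < (m ∩ σ j).card) := by
    intro j
    set S := σ j with hS
    let r : {x // x ∈ S} → {x // x ∈ S} → Prop := fun x y => suppPrec G lt x.1 y.1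
    have hSTO : IsStrictTotalOrder {x // x ∈ S} r :=
      { trichotomous := by
          intro x y hrxy hryx
          by_cases hxy : x = y
          · exact hxy
          · have hne : x.1 ≠ y.1 := fun h => hxy (Subtype.ext h)
            rcases (hσ.2.1 j).1 x.1 x.2 y.1 y.2 hne with h | h
            · exact absurd h hrxy
            · exact absurd h hryx
        irrefl := fun x => suppPrec_irrefl hlt x.1
        trans := fun _ _ _ h₁ h₂ => suppPrec_trans hlt h₁ h₂ }
    haveI : Nonempty {x // x ∈ S} := by
      obtain ⟨x, hx⟩ := hσ.1 j
      exact ⟨⟨x, hx⟩⟩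
    -- the top element of `S` lies in some generator, hence `S` is contained in it
    obtain ⟨q, hq⟩ := exists_sto_top r hSTO
    obtain ⟨mq, hmq, hqmq⟩ := hfull q.1
    have hSm : S ⊆ mq := by
      intro x hx
      rcases hq ⟨x, hx⟩ with h | h
      · have hx' : x = q.1 := congrArg Subtype.val h
        rw [hx']; exact hqmq
      · exact suppPrec_down h hmq hqmq
    have hcard : a j = S.card := by
      refine le_antisymm ?_ ?_
      · rw [ha j]
        refine Finset.sup_le fun m hm => ?_
        rw [hgen]
        exact Finset.card_le_card Finset.inter_subset_right
      · have h1 : S.card = genExp mq j := by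
          rw [hgen, Finset.inter_eq_right.mpr hSm]
        rw [ha j, h1]
        exact Finset.le_sup (f := fun m => genExp m j) hmq
    obtain ⟨e, he⟩ := exists_sto_enum r hSTO
      (N := a j) (by rw [Fintype.card_coe]; exact hcard.symm)
    refine ⟨fun ℓ => (e ℓ).1, fun ℓ => (e ℓ).2, fun ℓ ℓ' h => he ℓ ℓ' h, ?_, ?_⟩
    · intro x hx
      exact ⟨e.symm ⟨x, hx⟩, by simp⟩
    · intro m hm ℓ
      let T : Finset (Fin (a j)) := Finset.univ.filter (fun t => (e t).1 ∈ m)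
      have hmemT : ∀ t, t ∈ T ↔ (e t).1 ∈ m := fun t => by
        simp [T]
      have hdown : ∀ t t' : Fin (a j), t ≤ t' → t' ∈ T → t ∈ T := by
        intro t t' hle h'
        rcases hle.lt_or_eq with h | h
        · rw [hmemT] at h' ⊢
          exact suppPrec_down (he t t' h) hm h'
        · rwa [h]
      have hcardT : T.card = (m ∩ S).card := by
        refine Finset.card_bij (fun t _ => (e t).1) ?_ ?_ ?_
        · intro t ht
          exact Finset.mem_inter.mpr ⟨(hmemT t).mp ht, (e t).2⟩
        · intro t₁ h₁ t₂ h₂ h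
          exact e.injective (Subtype.ext h)
        · intro x hx
          rcases Finset.mem_inter.mp hx with ⟨hxm, hxS⟩
          refine ⟨e.symm ⟨x, hxS⟩, ?_, by simp⟩
          rw [hmemT]
          simpa using hxm
      rw [← hcardT, ← mem_iff_lt_card_of_down hdown ℓ]
      exact (hmemT ℓ).symm
  choose f hfmem hfmono hfsurj hfseg using main
  -- Step 2: assemble the bijection.
  have hinj : Function.Injective (fun p : Σ j : Fin k, Fin (a j) => f p.1 p.2) := by
    rintro ⟨j, ℓ⟩ ⟨j', ℓ'⟩ h
    simp only at h
    by_cases hjj : j = j'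
    · subst hjj
      suffices hℓ : ℓ = ℓ' by rw [hℓ]
      by_contra hne
      rcases lt_or_gt_of_ne hne with hl | hl
      · exact suppPrec_irrefl hlt (f j ℓ') (h ▸ hfmono j ℓ ℓ' hl)
      · exact suppPrec_irrefl hlt (f j ℓ') (h ▸ hfmono j ℓ' ℓ hl)
    · exact absurd (h ▸ hfmem j ℓ)
        (Finset.disjoint_left.mp (hσ.2.2.1 j' j (Ne.symm hjj)) (hfmem j' ℓ') )
  have hsurj : Function.Surjective (fun p : Σ j : Fin k, Fin (a j) => f p.1 p.2) := by
    intro i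
    obtain ⟨j, hj⟩ := hσ.2.2.2 i
    obtain ⟨ℓ, hℓ⟩ := hfsurj j i hj
    exact ⟨⟨j, ℓ⟩, hℓ⟩
  refine ⟨Equiv.ofBijective _ ⟨hinj, hsurj⟩, ?_, ?_, ?_, ?_, ?_⟩
  · intro j ℓ
    exact hfmem j ℓ
  · intro j ℓ ℓ' h
    exact hfmono j ℓ ℓ' h
  all_goals {
    have himg : ∀ m ∈ G, (Equiv.ofBijective _ ⟨hinj, hsurj⟩) ''
        polarSet a (genExp m) = (↑m : Set (Fin n)) := by
      intro m hm
      apply Set.eq_of_subset_of_subset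
      · rintro _ ⟨⟨j, ℓ⟩, hp, rfl⟩
        have hp' : (ℓ : ℕ) < genExp m j := hp
        rw [hgen] at hp'
        exact (hfseg j m hm ℓ).mpr hp'
      · intro i hi
        obtain ⟨j, hj⟩ := hσ.2.2.2 i
        obtain ⟨ℓ, rfl⟩ := hfsurj j i hj
        refine ⟨⟨j, ℓ⟩, ?_, rfl⟩
        show (ℓ : ℕ) < genExp m j
        rw [hgen]
        exact (hfseg j m hm ℓ).mp hi
    have hsub : ∀ m ∈ G, ∀ m' ∈ G,
        polarSet a (genExp m) ⊆ polarSet a (genExp m') → m ⊆ m' := by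
      intro m hm m' hm' hss i hi
      obtain ⟨j, hj⟩ := hσ.2.2.2 i
      obtain ⟨ℓ, rfl⟩ := hfsurj j i hj
      have h1 : (ℓ : ℕ) < genExp m j := by
        rw [hgen]; exact (hfseg j m hm ℓ).mp hi
      have h2 : (⟨j, ℓ⟩ : Σ j : Fin k, Fin (a j)) ∈ polarSet a (genExp m') := hss h1
      have h3 : (ℓ : ℕ) < genExp m' j := h2
      rw [hgen] at h3
      exact (hfseg j m' hm' ℓ).mpr h3
    first
    | exact himg
    | exact fun m hm m' hm' h =>
        hmin m hm m' hm' (hsub m hm m' hm' (subset_of_eq h))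
    | exact fun m hm m' hm' h => hmin m hm m' hm' (hsub m hm m' hm' h)
  }
end

section
/- There is no monomial ideal I ⊆ k[x_1,x_2,x_3] with full support whose support sets are C_1 = {1}, C_2 = {1,2} and C_3 = {1,2,3}; that is, no monomial ideal I satisfies ⋂{ supp(m) : m ∈ G(I^P), x_1 divides m } = {1}, ⋂{ supp(m) : m ∈ G(I^P), x_2 divides m } = {1,2} and ⋂{ supp(m) : m ∈ G(I^P), x_3 divides m } = {1,2,3}, where I^P is identified with I when I is squarefree. -/
/-- There is no monomial ideal `I ⊆ k[x_1,x_2,x_3]` with full support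
whose support sets are `C_1 = {1}`, `C_2 = {1,2}` and `C_3 = {1,2,3}`.  Since the three
prescribed equalities `⋂{ supp m : m ∈ G(I^P), x_i ∣ m } = C_i` take place inside
`k[x_1,x_2,x_3]`, the polarization `I^P` is again an ideal of `k[x_1,x_2,x_3]`, i.e. `I`
is squarefree and `I^P` is identified with `I`.  We represent such an ideal by its unique
minimal monomial generating set `G` (squarefree monomials are identified with their
supports; minimality of `G` means it is an antichain under divisibility = inclusion),
with full support, and `C i = ⋂ { supp m : m ∈ G, x_i ∣ m }` (variables indexed by
`Fin 3`, so `x_1, x_2, x_3` correspond to `0, 1, 2`). -/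
theorem no_ideal_with_support_sets_chain (G : Finset (Finset (Fin 3)))
    (hmin : ∀ s ∈ G, ∀ t ∈ G, s ⊆ t → s = t)
    (hfull : ∀ i : Fin 3, ∃ s ∈ G, i ∈ s)
    (C : Fin 3 → Set (Fin 3))
    (hC : ∀ i, C i = {j | ∀ s ∈ G, i ∈ s → j ∈ s}) :
    ¬ (C 0 = {0} ∧ C 1 = {0, 1} ∧ C 2 = {0, 1, 2}) := by
  rintro ⟨h0, h1, h2⟩
  obtain ⟨s, hsG, h2s⟩ := hfull 2
  have hs0 : (0 : Fin 3) ∈ s := by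
    have h : (0 : Fin 3) ∈ C 2 := by rw [h2]; simp
    rw [hC 2] at h; exact h s hsG h2s
  have hs1 : (1 : Fin 3) ∈ s := by
    have h : (1 : Fin 3) ∈ C 2 := by rw [h2]; simp
    rw [hC 2] at h; exact h s hsG h2s
  have h2n : (2 : Fin 3) ∉ C 1 := by rw [h1]; simp
  rw [hC 1] at h2n
  simp only [Set.mem_setOf_eq] at h2n
  push_neg at h2n
  obtain ⟨t, htG, ht1, ht2⟩ := h2n
  have hsub : t ⊆ s := by
    intro x hx
    fin_cases x
    · exact hs0
    · exact hs1
    · exact absurd hx ht2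
  have := hmin t htG s hsG hsub
  exact ht2 (this ▸ h2s)
end

section
/- There is no monomial ideal I ⊆ k[x_1,x_2,x_3] with full support whose support sets are C_1 = {1}, C_2 = {1,2} and C_3 = {3}; that is, no monomial ideal I satisfies ⋂{ supp(m) : m ∈ G(I^P), x_1 divides m } = {1}, ⋂{ supp(m) : m ∈ G(I^P), x_2 divides m } = {1,2} and ⋂{ supp(m) : m ∈ G(I^P), x_3 divides m } = {3}, where I^P is identified with I when I is squarefree. -/
/-- There is no monomial ideal `I ⊆ k[x_1,x_2,x_3]` with full support
whose support sets are `C_1 = {1}`, `C_2 = {1,2}` and `C_3 = {3}`.  Since the three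
prescribed equalities `⋂{ supp m : m ∈ G(I^P), x_i ∣ m } = C_i` take place inside
`k[x_1,x_2,x_3]`, the polarization `I^P` is again an ideal of `k[x_1,x_2,x_3]`, i.e. `I`
is squarefree and `I^P` is identified with `I`.  We represent such an ideal by its unique
minimal monomial generating set `G` (squarefree monomials are identified with their
supports; minimality of `G` means it is an antichain under divisibility = inclusion),
with full support, and `C i = ⋂ { supp m : m ∈ G, x_i ∣ m }` (variables indexed by
`Fin 3`, so `x_1, x_2, x_3` correspond to `0, 1, 2`). -/
theorem no_ideal_with_support_sets_example (G : Finset (Finset (Fin 3)))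
    (hmin : ∀ s ∈ G, ∀ t ∈ G, s ⊆ t → s = t)
    (hfull : ∀ i : Fin 3, ∃ s ∈ G, i ∈ s)
    (C : Fin 3 → Set (Fin 3))
    (hC : ∀ i, C i = {j | ∀ s ∈ G, i ∈ s → j ∈ s}) :
    ¬ (C 0 = {0} ∧ C 1 = {0, 1} ∧ C 2 = {2}) := by
  rintro ⟨h0, h1, h2⟩
  have hn1 : (1 : Fin 3) ∉ C 0 := by rw [h0]; simp
  rw [hC 0] at hn1; simp only [Set.mem_setOf_eq] at hn1
  push_neg at hn1
  obtain ⟨s₀, hs₀G, h0s₀, h1s₀⟩ := hn1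
  have hn0 : (0 : Fin 3) ∉ C 2 := by rw [h2]; simp
  rw [hC 2] at hn0; simp only [Set.mem_setOf_eq] at hn0
  push_neg at hn0
  obtain ⟨s₂, hs₂G, h2s₂, h0s₂⟩ := hn0
  have h01 : ∀ s ∈ G, (1 : Fin 3) ∈ s → (0 : Fin 3) ∈ s := by
    have h : (0 : Fin 3) ∈ C 1 := by rw [h1]; simp
    rw [hC 1] at h; exact h
  obtain ⟨s₁, hs₁G, h1s₁⟩ := hfull 1
  have h0s₁ := h01 s₁ hs₁G h1s₁
  have h1s₂ : (1 : Fin 3) ∉ s₂ := fun h => h0s₂ (h01 s₂ hs₂G h)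
  have h2s₀ : (2 : Fin 3) ∉ s₀ := by
    intro h
    have hsub : s₂ ⊆ s₀ := by
      intro x hx
      fin_cases x
      · exact absurd hx h0s₂
      · exact absurd hx h1s₂
      · exact h
    have heq := hmin s₂ hs₂G s₀ hs₀G hsub
    exact h0s₂ (heq ▸ h0s₀)
  have hsub : s₀ ⊆ s₁ := by
    intro x hx
    fin_cases x
    · exact h0s₁
    · exact absurd hx h1s₀
    · exact absurd hx h2s₀
  have heq := hmin s₀ hs₀G s₁ hs₁G hsub
  exact h1s₀ (heq ▸ h1s₁)
end
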